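/- Let n ≥ 1 and x ∈ ℝⁿ. The function g : ℝ → ℝ, g(ε) = P'(ε·x) (where ε·x = (εx_1, …, εx_n)), is smooth; its k-th Taylor coefficient at 0 vanishes for every k < n−1, its (n−1)-th Taylor coefficient at 0 equals (−1)^n e_{n−1}(x), and its n-th Taylor coefficient at 0 equals (−1)^n (n/2) e_n(x). -/

import Mathlib

open Finset Filter


noncomputable def td (u : ℝ) : ℝ := if u = 0 then 1 else u / (Real.exp u - 1)

/-- `p`-th elementary symmetric polynomial of a tuple of reals. -/
noncomputable def esymm {n : ℕ} (x : Fin n → ℝ) (p : ℕ) : ℝ :=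
  ∑ t ∈ Finset.univ.powersetCard p, ∏ i ∈ t, x i

/-- `P(x) = (∏ td(x_i)) · Σ_p (−1)^p e_p(exp x)`. -/
noncomputable def Pcl {n : ℕ} (x : Fin n → ℝ) : ℝ :=
  (∏ i, td (x i)) *
    ∑ p ∈ Finset.range (n + 1), (-1 : ℝ) ^ p * esymm (fun i => Real.exp (x i)) p

/-- `P'(x) = (∏ td(x_i)) · Σ_p (−1)^p p e_p(exp x)`. -/
noncomputable def Pcl' {n : ℕ} (x : Fin n → ℝ) : ℝ :=
  (∏ i, td (x i)) *
    ∑ p ∈ Finset.range (n + 1), (-1 : ℝ) ^ p * (p : ℝ) * esymm (fun i => Real.exp (x i)) p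

/-- `P''(x) = (∏ td(x_i)) · Σ_p (−1)^p (p(p−1)/2) e_p(exp x)`. -/
noncomputable def Pcl'' {n : ℕ} (x : Fin n → ℝ) : ℝ :=
  (∏ i, td (x i)) *
    ∑ p ∈ Finset.range (n + 1),
      (-1 : ℝ) ^ p * ((p : ℝ) * ((p : ℝ) - 1) / 2) * esymm (fun i => Real.exp (x i)) p

noncomputable def Ecoef : ℕ → ℝ := fun k => ((k+1).factorial : ℝ)⁻¹

noncomputable def Eser : FormalMultilinearSeries ℝ ℝ ℝ :=
  FormalMultilinearSeries.ofScalars ℝ Ecoef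

noncomputable def Efun : ℝ → ℝ := Eser.sum

lemma Eradius : Eser.radius = ⊤ := by
  apply FormalMultilinearSeries.ofScalars_radius_eq_top_of_tendsto
  · exact Eventually.of_forall fun n => by
      simp [Ecoef, Nat.factorial_ne_zero]
  · have h : (fun n : ℕ => ‖Ecoef n.succ‖ / ‖Ecoef n‖) = fun n : ℕ => ((n:ℝ)+2)⁻¹ := by
      funext n
      have h1 : (0:ℝ) < (n+1).factorial := by positivity
      simp only [Ecoef, Real.norm_eq_abs, abs_inv, Nat.abs_cast]
      rw [Nat.factorial_succ (n+1)]
      push_cast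
      rw [div_eq_iff (by positivity)]
      field_simp
      ring
    rw [h]
    have := tendsto_one_div_add_atTop_nhds_zero_nat (𝕜 := ℝ)
    have h2 : Tendsto (fun n : ℕ => ((n:ℝ)+2)⁻¹) atTop (nhds 0) := by
      apply squeeze_zero (fun n => by positivity) (fun n => ?_) this
      rw [one_div]
      gcongr
      norm_num
    exact h2

lemma EhasSeries : HasFPowerSeriesOnBall Efun Eser 0 ⊤ := by
  have := Eser.hasFPowerSeriesOnBall (by rw [Eradius]; exact ENNReal.zero_lt_top)
  rwa [Eradius] at this

lemma EcontDiff {n : WithTop ℕ∞} : ContDiff ℝ n Efun := by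
  apply AnalyticOnNhd.contDiff
  intro x _
  exact EhasSeries.analyticOnNhd x (EMetric.mem_ball.2 (edist_lt_top x 0))

lemma Efun_zero : Efun 0 = 1 := by
  have h := EhasSeries.coeff_zero (fun _ => 0)
  rw [← h]
  simp [Eser, FormalMultilinearSeries.ofScalars, Ecoef]

lemma Efun_hasDerivAt : HasDerivAt Efun (1/2) 0 := by
  have h := EhasSeries.hasFPowerSeriesAt.hasDerivAt
  have : (Eser 1 fun _ => 1) = 1/2 := by
    simp [Eser, FormalMultilinearSeries.ofScalars, Ecoef]
  rwa [this] at h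

lemma Efun_mul (u : ℝ) : u * Efun u = Real.exp u - 1 := by
  have hsum : Efun u = ∑' k : ℕ, Ecoef k • u ^ k := by
    unfold Efun Eser
    exact FormalMultilinearSeries.ofScalars_sum_eq Ecoef u
  have hexp : Real.exp u = ∑' k : ℕ, u ^ k / (k.factorial : ℝ) := by
    rw [Real.exp_eq_exp_ℝ, NormedSpace.exp_eq_tsum_div]
  have hsummable : Summable (fun k : ℕ => u ^ k / (k.factorial : ℝ)) :=
    Real.summable_pow_div_factorial u
  rw [hsum, ← tsum_mul_left, hexp, Summable.tsum_eq_zero_add hsummable]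
  have : ∀ k : ℕ, u * (Ecoef k • u ^ k) = u ^ (k+1) / ((k+1).factorial : ℝ) := by
    intro k
    simp [Ecoef, smul_eq_mul, pow_succ]
    ring
  simp only [this]
  simp

lemma Efun_ne (u : ℝ) : Efun u ≠ 0 := by
  intro h
  have := Efun_mul u
  rw [h, mul_zero] at this
  have h1 : Real.exp u = 1 := by linarith
  rw [Real.exp_eq_one_iff] at h1
  subst h1
  rw [Efun_zero] at h; norm_num at h

lemma td_eq (u : ℝ) : td u = (Efun u)⁻¹ := by
  rcases eq_or_ne u 0 with rfl | hu
  · simp [td, Efun_zero]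
  · have h1 : Real.exp u - 1 ≠ 0 := by
      intro h
      exact hu ((Real.exp_eq_one_iff _).1 (by linarith))
    have h2 : Efun u = (Real.exp u - 1) / u := by
      field_simp [← Efun_mul u]
      rw [mul_comm]; exact Efun_mul u
    rw [td, if_neg hu, h2]
    rw [inv_div]

noncomputable def fE (u : ℝ) : ℝ := Real.exp u * td u

lemma fE_contDiff {n : WithTop ℕ∞} : ContDiff ℝ n fE := by
  have : fE = fun u => Real.exp u * (Efun u)⁻¹ := by
    funext u; rw [fE, td_eq]
  rw [this]
  exact Real.contDiff_exp.mul (EcontDiff.inv Efun_ne)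

lemma fE_zero : fE 0 = 1 := by simp [fE, td]

lemma fE_hasDerivAt : HasDerivAt fE (1/2) 0 := by
  have h1 : HasDerivAt Real.exp (Real.exp 0) 0 := Real.hasDerivAt_exp 0
  have h2 : HasDerivAt (fun x => (Efun x)⁻¹) (-(1/2) / (Efun 0)^2) 0 :=
    Efun_hasDerivAt.inv (Efun_ne 0)
  have h3 := h1.mul h2
  have he : fE = fun u => Real.exp u * (Efun u)⁻¹ := by
    funext u; rw [fE, td_eq]
  rw [he]
  refine h3.congr_deriv ?_
  rw [Efun_zero, Real.exp_zero]
  norm_num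

lemma td_mul (u : ℝ) : td u * (1 - Real.exp u) = -u := by
  rcases eq_or_ne u 0 with rfl | hu
  · simp [td]
  · have h1 : Real.exp u - 1 ≠ 0 := by
      intro h
      exact hu ((Real.exp_eq_one_iff _).1 (by linarith))
    rw [td, if_neg hu]
    field_simp
    ring

lemma prod_one_sub {n : ℕ} (y : Fin n → ℝ) (s : Finset (Fin n)) :
    ∏ j ∈ s, (1 - y j) = ∑ t ∈ s.powerset, (-1:ℝ)^t.card * ∏ j ∈ t, y j := by
  have h : ∏ j ∈ s, (1 - y j) = ∏ j ∈ s, ((fun j => -y j) j + (fun _ => (1:ℝ)) j) := by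
    apply Finset.prod_congr rfl; intro j _; ring
  rw [h, Finset.prod_add]
  apply Finset.sum_congr rfl
  intro t _
  rw [Finset.prod_const_one, mul_one]
  have : ∀ j ∈ t, -y j = (-1 : ℝ) * y j := fun j _ => by ring
  rw [Finset.prod_congr rfl this, Finset.prod_mul_distrib, Finset.prod_const]

lemma alt_sum (n : ℕ) (y : Fin n → ℝ) :
    ∑ p ∈ Finset.range (n+1), (-1:ℝ)^p * p * esymm y p
      = ∑ i : Fin n, (-(y i)) * ∏ j ∈ Finset.univ.erase i, (1 - y j) := by
  classical
  -- step 1: LHS = sum over powerset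
  have h1 : ∑ p ∈ Finset.range (n+1), (-1:ℝ)^p * p * esymm y p
      = ∑ t ∈ (Finset.univ : Finset (Fin n)).powerset,
          (-1:ℝ)^t.card * t.card * ∏ j ∈ t, y j := by
    rw [Finset.powerset_card_disjiUnion]
    erw [Finset.sum_disjiUnion]
    rw [Finset.card_univ, Fintype.card_fin]
    apply Finset.sum_congr rfl
    intro p _
    rw [esymm, Finset.mul_sum]
    apply Finset.sum_congr rfl
    intro t ht
    rw [(Finset.mem_powersetCard.1 ht).2]
  -- step 2: swap
  have h2 : ∑ t ∈ (Finset.univ : Finset (Fin n)).powerset,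
        (-1:ℝ)^t.card * t.card * ∏ j ∈ t, y j
      = ∑ i : Fin n, ∑ t ∈ (Finset.univ : Finset (Fin n)).powerset.filter (fun t => i ∈ t),
          (-1:ℝ)^t.card * ∏ j ∈ t, y j := by
    have : ∀ t : Finset (Fin n),
        (-1:ℝ)^t.card * t.card * ∏ j ∈ t, y j
          = ∑ i : Fin n, if i ∈ t then (-1:ℝ)^t.card * ∏ j ∈ t, y j else 0 := by
      intro t
      rw [Finset.sum_ite_mem, Finset.univ_inter, Finset.sum_const]
      rw [nsmul_eq_mul]
      ring
    simp_rw [this]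
    rw [Finset.sum_comm]
    apply Finset.sum_congr rfl
    intro i _
    rw [Finset.sum_filter]
  -- step 3: inner bijection
  rw [h1, h2]
  apply Finset.sum_congr rfl
  intro i _
  have h3 : ∑ t ∈ (Finset.univ : Finset (Fin n)).powerset.filter (fun t => i ∈ t),
        (-1:ℝ)^t.card * ∏ j ∈ t, y j
      = ∑ s ∈ ((Finset.univ : Finset (Fin n)).erase i).powerset,
          (-1:ℝ)^(insert i s).card * ∏ j ∈ insert i s, y j := by
    apply Finset.sum_nbij' (fun t => t.erase i) (fun s => insert i s)
    · intro t ht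
      rw [Finset.mem_filter] at ht
      rw [Finset.mem_powerset]
      exact Finset.erase_subset_erase i (Finset.mem_powerset.1 ht.1)
    · intro s hs
      rw [Finset.mem_filter, Finset.mem_powerset]
      exact ⟨Finset.subset_univ _, Finset.mem_insert_self i s⟩
    · intro t ht
      rw [Finset.mem_filter] at ht
      exact Finset.insert_erase ht.2
    · intro s hs
      rw [Finset.mem_powerset] at hs
      apply Finset.erase_insert
      intro hi
      exact (Finset.notMem_erase i Finset.univ) (hs hi)
    · intro t ht
      rw [Finset.mem_filter] at ht
      rw [Finset.insert_erase ht.2]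
  rw [h3]
  rw [prod_one_sub, Finset.mul_sum]
  apply Finset.sum_congr rfl
  intro s hs
  rw [Finset.mem_powerset] at hs
  have hi : i ∉ s := fun hi => (Finset.notMem_erase i Finset.univ) (hs hi)
  rw [Finset.card_insert_of_notMem hi, Finset.prod_insert hi]
  ring

lemma Pcl'_eq {n : ℕ} (hn : 1 ≤ n) (x : Fin n → ℝ) :
    Pcl' x = (-1:ℝ)^n * ∑ i, fE (x i) * ∏ j ∈ Finset.univ.erase i, x j := by
  classical
  rw [Pcl', alt_sum n (fun i => Real.exp (x i)), Finset.mul_sum, Finset.mul_sum]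
  apply Finset.sum_congr rfl
  intro i _
  have hprod : (∏ j, td (x j))
      = td (x i) * ∏ j ∈ Finset.univ.erase i, td (x j) :=
    (Finset.mul_prod_erase Finset.univ (fun j => td (x j)) (Finset.mem_univ i)).symm
  have hcomb : (∏ j ∈ Finset.univ.erase i, td (x j))
        * ∏ j ∈ Finset.univ.erase i, (1 - Real.exp (x j))
      = ∏ j ∈ Finset.univ.erase i, (-(x j)) := by
    rw [← Finset.prod_mul_distrib]
    exact Finset.prod_congr rfl fun j _ => td_mul (x j)
  have hneg : ∏ j ∈ Finset.univ.erase i, (-(x j))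
      = (-1:ℝ)^(n-1) * ∏ j ∈ Finset.univ.erase i, x j := by
    have : ∀ j ∈ Finset.univ.erase i, -(x j) = (-1:ℝ) * x j := fun j _ => by ring
    rw [Finset.prod_congr rfl this, Finset.prod_mul_distrib, Finset.prod_const,
      Finset.card_erase_of_mem (Finset.mem_univ i), Finset.card_univ, Fintype.card_fin]
  have hn1 : (-1:ℝ) * (-1:ℝ)^(n-1) = (-1:ℝ)^n := by
    rw [← pow_succ']
    congr 1
    omega
  calc (∏ j, td (x j)) * (-(Real.exp (x i)) * ∏ j ∈ Finset.univ.erase i, (1 - Real.exp (x j)))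
      = (-(Real.exp (x i) * td (x i)))
          * ((∏ j ∈ Finset.univ.erase i, td (x j))
            * ∏ j ∈ Finset.univ.erase i, (1 - Real.exp (x j))) := by
        rw [hprod]; ring
    _ = (-(Real.exp (x i) * td (x i)))
          * ((-1:ℝ)^(n-1) * ∏ j ∈ Finset.univ.erase i, x j) := by rw [hcomb, hneg]
    _ = ((-1:ℝ) * (-1:ℝ)^(n-1)) * (fE (x i) * ∏ j ∈ Finset.univ.erase i, x j) := by
        rw [fE]; ring
    _ = (-1:ℝ)^n * (fE (x i) * ∏ j ∈ Finset.univ.erase i, x j) := by rw [hn1]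

lemma esymm_pred {n : ℕ} (hn : 1 ≤ n) (x : Fin n → ℝ) :
    esymm x (n-1) = ∑ i : Fin n, ∏ j ∈ Finset.univ.erase i, x j := by
  classical
  rw [esymm]
  have himg : (Finset.univ : Finset (Fin n)).powersetCard (n-1)
      = Finset.univ.image (fun i : Fin n => Finset.univ.erase i) := by
    ext t
    simp only [Finset.mem_powersetCard, Finset.mem_image]
    constructor
    · rintro ⟨hsub, hcard⟩
      have hc : tᶜ.card = 1 := by
        rw [Finset.card_compl, Fintype.card_fin, hcard]
        omega
      obtain ⟨a, ha⟩ := Finset.card_eq_one.1 hc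
      refine ⟨a, Finset.mem_univ a, ?_⟩
      have h2 := congrArg compl ha
      rw [compl_compl, Finset.compl_singleton] at h2
      exact h2.symm
    · rintro ⟨a, _, rfl⟩
      exact ⟨Finset.subset_univ _,
        by rw [Finset.card_erase_of_mem (Finset.mem_univ a), Finset.card_univ,
          Fintype.card_fin]⟩
  rw [himg, Finset.sum_image]
  intro a _ b _ hab
  by_contra hne
  have h3 : a ∈ Finset.univ.erase b := Finset.mem_erase.2 ⟨hne, Finset.mem_univ a⟩
  rw [← show Finset.univ.erase a = Finset.univ.erase b from hab] at h3
  exact (Finset.notMem_erase a Finset.univ) h3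

lemma esymm_top {n : ℕ} (x : Fin n → ℝ) : esymm x n = ∏ j, x j := by
  rw [esymm]
  have h : (Finset.univ : Finset (Fin n)).powersetCard n = {Finset.univ} := by
    simpa using Finset.powersetCard_self (Finset.univ : Finset (Fin n))
  rw [h, Finset.sum_singleton]

lemma sum_x_prod {n : ℕ} (x : Fin n → ℝ) :
    ∑ i : Fin n, x i * ∏ j ∈ Finset.univ.erase i, x j = n * ∏ j, x j := by
  have h : ∀ i ∈ Finset.univ, x i * ∏ j ∈ Finset.univ.erase i, x j = ∏ j, x j :=
    fun i _ => Finset.mul_prod_erase _ _ (Finset.mem_univ i)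
  rw [Finset.sum_congr rfl h, Finset.sum_const, Finset.card_univ, Fintype.card_fin,
    nsmul_eq_mul]

lemma iter_pow_mul : ∀ (m : ℕ) (h : ℝ → ℝ), ContDiff ℝ (⊤ : ℕ∞) h →
    ((∀ k, k < m → iteratedDeriv k (fun ε : ℝ => ε ^ m * h ε) 0 = 0) ∧
     iteratedDeriv m (fun ε : ℝ => ε ^ m * h ε) 0 = (m.factorial : ℝ) * h 0 ∧
     iteratedDeriv (m+1) (fun ε : ℝ => ε ^ m * h ε) 0
       = ((m+1).factorial : ℝ) * deriv h 0) := by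
  intro m
  induction m with
  | zero =>
    intro h hh
    refine ⟨fun k hk => absurd hk (Nat.not_lt_zero k), ?_, ?_⟩
    · simp [iteratedDeriv_zero]
    · simp only [pow_zero, one_mul]
      rw [iteratedDeriv_one]
      simp [Nat.factorial]
  | succ m ih =>
    intro h hh
    have hdiff : Differentiable ℝ h := hh.differentiable (by simp)
    have hd : deriv (fun ε : ℝ => ε ^ (m+1) * h ε)
        = fun ε : ℝ => ε ^ m * (((m:ℝ)+1) * h ε + ε * deriv h ε) := by
      funext ε
      rw [deriv_fun_mul (differentiableAt_pow (m+1)) (hdiff ε), deriv_pow_field]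
      push_cast
      ring
    set H : ℝ → ℝ := fun ε => ((m:ℝ)+1) * h ε + ε * deriv h ε with hHdef
    have hderivh : ContDiff ℝ (⊤ : ℕ∞) (deriv h) :=
      (contDiff_infty_iff_deriv.1 hh).2
    have hH : ContDiff ℝ (⊤ : ℕ∞) H :=
      (contDiff_const.mul hh).add (contDiff_id.mul hderivh)
    obtain ⟨ih0, ih1, ih2⟩ := ih H hH
    have hstep : ∀ k : ℕ, iteratedDeriv (k+1) (fun ε : ℝ => ε ^ (m+1) * h ε) 0
        = iteratedDeriv k (fun ε : ℝ => ε ^ m * H ε) 0 := by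
      intro k
      rw [iteratedDeriv_succ', hd]
    refine ⟨?_, ?_, ?_⟩
    · intro k hk
      match k with
      | 0 => simp [iteratedDeriv_zero]
      | (j+1) =>
        rw [hstep j]
        exact ih0 j (by omega)
    · rw [hstep m, ih1]
      have hH0 : H 0 = ((m:ℝ)+1) * h 0 := by simp [hHdef]
      rw [hH0, Nat.factorial_succ]
      push_cast
      ring
    · rw [hstep (m+1), ih2]
      have hdH : deriv H 0 = ((m:ℝ)+2) * deriv h 0 := by
        have h1 : HasDerivAt h (deriv h 0) 0 := (hdiff 0).hasDerivAt
        have h2 : HasDerivAt (deriv h) (deriv (deriv h) 0) 0 :=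
          ((hderivh.differentiable (by simp)) 0).hasDerivAt
        have h3 : HasDerivAt (fun ε : ℝ => ε * deriv h ε)
            (1 * deriv h 0 + 0 * deriv (deriv h) 0) 0 :=
          (hasDerivAt_id 0).mul h2
        have h4 := (h1.const_mul ((m:ℝ)+1)).add h3
        have := h4.deriv
        exact this.trans (by ring)
      rw [hdH, Nat.factorial_succ (m+1)]
      push_cast
      ring

/-- Chern-root form of Lemma 4.6(a).  For `n ≥ 1` and `x ∈ ℝⁿ`,
the function `g ε = P'(ε·x)` is smooth, its Taylor coefficients at 0 of order
`< n−1` vanish, its `(n−1)`-th Taylor coefficient equals `(−1)^n e_{n−1}(x)`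
and its `n`-th Taylor coefficient equals `(−1)^n (n/2) e_n(x)`. -/
theorem Pcl'_taylor (n : ℕ) (hn : 1 ≤ n) (x : Fin n → ℝ) :
    ContDiff ℝ (⊤ : ℕ∞) (fun ε : ℝ => Pcl' (fun i => ε * x i)) ∧
    (∀ k, k < n - 1 →
      iteratedDeriv k (fun ε : ℝ => Pcl' (fun i => ε * x i)) 0 / (Nat.factorial k : ℝ)
        = 0) ∧
    iteratedDeriv (n - 1) (fun ε : ℝ => Pcl' (fun i => ε * x i)) 0
        / (Nat.factorial (n - 1) : ℝ)
      = (-1 : ℝ) ^ n * esymm x (n - 1) ∧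
    iteratedDeriv n (fun ε : ℝ => Pcl' (fun i => ε * x i)) 0 / (Nat.factorial n : ℝ)
      = (-1 : ℝ) ^ n * ((n : ℝ) / 2) * esymm x n := by
  classical
  obtain ⟨m, rfl⟩ : ∃ m, n = m + 1 := ⟨n - 1, (Nat.succ_pred_eq_of_pos hn).symm⟩
  have hm : m + 1 - 1 = m := by omega
  set c : Fin (m+1) → ℝ := fun i => ∏ j ∈ Finset.univ.erase i, x j with hc
  set h : ℝ → ℝ := fun ε => (-1:ℝ)^(m+1) * ∑ i, fE (ε * x i) * c i with hhdef
  have hfun : (fun ε : ℝ => Pcl' (fun i => ε * x i)) = fun ε : ℝ => ε ^ m * h ε := by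
    funext ε
    rw [Pcl'_eq hn (fun i => ε * x i), hhdef]
    have hp : ∀ i : Fin (m+1), ∏ j ∈ Finset.univ.erase i, (ε * x j) = ε ^ m * c i := by
      intro i
      rw [Finset.prod_mul_distrib, Finset.prod_const,
        Finset.card_erase_of_mem (Finset.mem_univ i), Finset.card_univ, Fintype.card_fin,
        hm]
    simp only [hp]
    rw [Finset.mul_sum, Finset.mul_sum, Finset.mul_sum]
    apply Finset.sum_congr rfl
    intro i _
    ring
  have hsmooth : ∀ (ncd : WithTop ℕ∞), ContDiff ℝ ncd h := by
    intro ncd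
    apply ContDiff.mul contDiff_const
    apply ContDiff.sum
    intro i _
    exact (fE_contDiff.comp (contDiff_id.mul contDiff_const)).mul contDiff_const
  have hh0 : h 0 = (-1:ℝ)^(m+1) * esymm x m := by
    rw [hhdef]
    simp only [zero_mul, fE_zero, one_mul]
    have hpred := esymm_pred hn x
    rw [hm] at hpred
    rw [hpred]
  have hderiv : deriv h 0 = (-1:ℝ)^(m+1) * (((m:ℝ)+1)/2) * esymm x (m+1) := by
    have hterm : ∀ i : Fin (m+1), HasDerivAt (fun ε : ℝ => fE (ε * x i) * c i)
        (1/2 * x i * c i) 0 := by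
      intro i
      have hin : HasDerivAt (fun ε : ℝ => ε * x i) (x i) 0 := hasDerivAt_mul_const (x i)
      have hout : HasDerivAt fE (1/2) ((fun ε : ℝ => ε * x i) 0) := by
        simpa using fE_hasDerivAt
      exact (HasDerivAt.comp 0 hout hin).mul_const (c i)
    have hsumD : HasDerivAt (fun ε : ℝ => ∑ i, fE (ε * x i) * c i)
        (∑ i, 1/2 * x i * c i) 0 := HasDerivAt.fun_sum fun i _ => hterm i
    have hD := (hsumD.const_mul ((-1:ℝ)^(m+1))).deriv
    rw [hhdef, hD]
    have hsum2 : ∑ i, 1/2 * x i * c i = ((m:ℝ)+1)/2 * esymm x (m+1) := by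
      rw [esymm_top]
      have h2 : ∑ i, 1/2 * x i * c i = 1/2 * ∑ i, x i * c i := by
        rw [Finset.mul_sum]
        apply Finset.sum_congr rfl
        intro i _
        ring
      rw [h2, hc]
      simp only []
      rw [sum_x_prod]
      push_cast
      ring
    rw [hsum2]
    ring
  obtain ⟨it0, it1, it2⟩ := iter_pow_mul m h (hsmooth _)
  rw [hfun]
  refine ⟨?_, ?_, ?_, ?_⟩
  · exact (contDiff_id.pow m).mul (hsmooth _)
  · intro k hk
    rw [hm] at hk
    rw [it0 k hk, zero_div]
  · rw [hm, it1, hh0]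
    rw [mul_comm ((m.factorial : ℝ)) _, mul_div_assoc,
      div_self (by exact_mod_cast m.factorial_ne_zero), mul_one]
  · rw [it2, hderiv]
    rw [mul_comm (((m+1).factorial : ℝ)) _, mul_div_assoc,
      div_self (by exact_mod_cast (m+1).factorial_ne_zero), mul_one]
    push_cast
    ring
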